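/- Let l be even, m ∈ ℕ, and ν, ν' pair partitions of {1, ..., l}. Then (1/m^{l/2}) · #{k : {1,...,l} → {1,...,m} : ker k ≥ ν and ker k ≥ ν'} = m^{|ν ∨ ν'| − l/2}, and this quantity converges to δ_{ν,ν'} as m → ∞. -/
import Mathlib


open Filter
open scoped Classical

lemma aux_card_count {l : ℕ} (σ : Setoid (Fin l)) (m : ℕ) :
    Nat.card {k : Fin l → Fin m // σ ≤ Setoid.ker k} = m ^ σ.classes.ncard := by
  have e : {k : Fin l → Fin m // σ ≤ Setoid.ker k} ≃ (Quotient σ → Fin m) :=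
  { toFun := fun k => Quotient.lift k.1 (fun a b hab => k.2 hab)
    invFun := fun g => ⟨fun a => g (Quotient.mk σ a),
      fun a b hab => show g _ = g _ from congrArg g (Quotient.sound hab)⟩
    left_inv := fun k => Subtype.ext rfl
    right_inv := fun g => funext fun q => Quotient.inductionOn q fun a => rfl }
  rw [Nat.card_congr e, Nat.card_fun, Nat.card_congr σ.quotientEquivClasses,
    Nat.card_coe_set_eq, Nat.card_eq_fintype_card, Fintype.card_fin]

lemma aux_sum {l : ℕ} (σ : Setoid (Fin l)) :
    ∑ c ∈ σ.classes.toFinset, c.ncard = l := by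
  have hdisj : ∀ c ∈ σ.classes.toFinset, ∀ d ∈ σ.classes.toFinset, c ≠ d →
      Disjoint c.toFinset d.toFinset := by
    intro c hc d hd hcd
    rw [Finset.disjoint_left]
    intro x hx hx'
    rw [Set.mem_toFinset] at hx hx'
    rw [Set.mem_toFinset] at hc hd
    exact hcd (Setoid.eq_of_mem_classes hc hx hd hx')
  have hb : σ.classes.toFinset.biUnion (fun c => c.toFinset) = Finset.univ := by
    apply Finset.eq_univ_iff_forall.mpr
    intro x
    obtain ⟨c, ⟨hc, hxc⟩, -⟩ := Setoid.classes_eqv_classes (r := σ) x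
    exact Finset.mem_biUnion.mpr ⟨c, Set.mem_toFinset.mpr hc, Set.mem_toFinset.mpr hxc⟩
  have := Finset.card_biUnion hdisj
  rw [hb, Finset.card_univ, Fintype.card_fin] at this
  calc ∑ c ∈ σ.classes.toFinset, c.ncard
      = ∑ c ∈ σ.classes.toFinset, c.toFinset.card :=
        Finset.sum_congr rfl fun c _ => Set.ncard_eq_toFinset_card' c
    _ = l := this.symm

lemma aux_pair_card {l : ℕ} (σ : Setoid (Fin l)) (h : ∀ c ∈ σ.classes, c.ncard = 2) :
    2 * σ.classes.ncard = l := by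
  have hs := aux_sum σ
  rw [Finset.sum_congr rfl (fun c hc => h c (Set.mem_toFinset.mp hc)),
    Finset.sum_const, smul_eq_mul, mul_comm] at hs
  rwa [Set.ncard_eq_toFinset_card']

lemma aux_class_two_le {l : ℕ} (ν τ : Setoid (Fin l))
    (hν : ∀ c ∈ ν.classes, c.ncard = 2) (hle : ν ≤ τ) :
    ∀ c ∈ τ.classes, 2 ≤ c.ncard := by
  rintro c ⟨y, rfl⟩
  have hsub : {x | ν x y} ⊆ {x | τ x y} := fun x hx => hle hx
  calc 2 = ({x | ν x y}).ncard := (hν _ (ν.mem_classes y)).symm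
    _ ≤ _ := Set.ncard_le_ncard hsub (Set.toFinite _)

lemma aux_two_mul_le {l : ℕ} (τ : Setoid (Fin l)) (h : ∀ c ∈ τ.classes, 2 ≤ c.ncard) :
    2 * τ.classes.ncard ≤ l := by
  have hs := aux_sum τ
  calc 2 * τ.classes.ncard = ∑ _c ∈ τ.classes.toFinset, 2 := by
        rw [Finset.sum_const, smul_eq_mul, mul_comm, Set.ncard_eq_toFinset_card']
    _ ≤ ∑ c ∈ τ.classes.toFinset, c.ncard :=
        Finset.sum_le_sum fun c hc => h c (Set.mem_toFinset.mp hc)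
    _ = l := hs

lemma aux_all_two {l : ℕ} (τ : Setoid (Fin l)) (h : ∀ c ∈ τ.classes, 2 ≤ c.ncard)
    (heq : 2 * τ.classes.ncard = l) : ∀ c ∈ τ.classes, c.ncard = 2 := by
  by_contra hcon
  push_neg at hcon
  obtain ⟨c, hc, hc2⟩ := hcon
  have hlt : ∑ _c ∈ τ.classes.toFinset, 2 < ∑ c ∈ τ.classes.toFinset, c.ncard :=
    Finset.sum_lt_sum (fun d hd => h d (Set.mem_toFinset.mp hd))
      ⟨c, Set.mem_toFinset.mpr hc, lt_of_le_of_ne (h c hc) (Ne.symm hc2)⟩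
  rw [Finset.sum_const, smul_eq_mul, mul_comm, ← Set.ncard_eq_toFinset_card', aux_sum τ,
    heq] at hlt
  exact lt_irrefl _ hlt

lemma aux_eq_of_le {l : ℕ} (ν τ : Setoid (Fin l))
    (hν : ∀ c ∈ ν.classes, c.ncard = 2) (hτ : ∀ c ∈ τ.classes, c.ncard = 2)
    (hle : ν ≤ τ) : ν = τ := by
  apply Setoid.ext
  intro x y
  refine ⟨fun h => hle h, fun h => ?_⟩
  have hsub : {z | ν z y} ⊆ {z | τ z y} := fun z hz => hle hz
  have hcard : ({z | τ z y}).ncard ≤ ({z | ν z y}).ncard := by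
    rw [hν _ (ν.mem_classes y), hτ _ (τ.mem_classes y)]
  have := Set.eq_of_subset_of_ncard_le hsub hcard (Set.toFinite _)
  have hx : x ∈ {z | ν z y} := this ▸ h
  exact hx

/-- for `l` even and pair partitions `ν, ν'` of `{1,...,l}` (setoids on `Fin l`
with all classes of size two), for every `m ≥ 1` the normalized count
`(1/m^{l/2}) · #{k : Fin l → Fin m | ker k ≥ ν and ker k ≥ ν'}` equals
`m^{|ν ⊔ ν'| - l/2}`, and this quantity converges to `δ_{ν,ν'}` as `m → ∞`. -/
theorem normalized_count_eq_rpow_and_tendsto_delta (l : ℕ) (hl : Even l)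
    (ν ν' : Setoid (Fin l))
    (hν : ∀ c ∈ ν.classes, c.ncard = 2) (hν' : ∀ c ∈ ν'.classes, c.ncard = 2) :
    (∀ m : ℕ, 0 < m →
      (Nat.card {k : Fin l → Fin m // ν ≤ Setoid.ker k ∧ ν' ≤ Setoid.ker k} : ℝ)
          / (m : ℝ) ^ ((l : ℝ) / 2)
        = (m : ℝ) ^ ((((ν ⊔ ν').classes.ncard : ℝ)) - (l : ℝ) / 2)) ∧
    Tendsto (fun m : ℕ =>
        (Nat.card {k : Fin l → Fin m // ν ≤ Setoid.ker k ∧ ν' ≤ Setoid.ker k} : ℝ)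
          / (m : ℝ) ^ ((l : ℝ) / 2))
      atTop (nhds (if ν = ν' then (1 : ℝ) else 0)) := by
  set τ := ν ⊔ ν' with hτdef
  set c := τ.classes.ncard with hcdef
  have hcount : ∀ m : ℕ,
      Nat.card {k : Fin l → Fin m // ν ≤ Setoid.ker k ∧ ν' ≤ Setoid.ker k} = m ^ c := by
    intro m
    rw [Nat.card_congr (Equiv.subtypeEquivRight
      (fun k => (sup_le_iff (a := ν) (b := ν') (c := Setoid.ker k)).symm))]
    exact aux_card_count τ m
  have heq : ∀ m : ℕ, 0 < m →
      (Nat.card {k : Fin l → Fin m // ν ≤ Setoid.ker k ∧ ν' ≤ Setoid.ker k} : ℝ)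
          / (m : ℝ) ^ ((l : ℝ) / 2) = (m : ℝ) ^ ((c : ℝ) - (l : ℝ) / 2) := by
    intro m hm
    have hm0 : (0 : ℝ) < m := Nat.cast_pos.mpr hm
    rw [hcount m, Nat.cast_pow, ← Real.rpow_natCast (m : ℝ) c, ← Real.rpow_sub hm0]
  refine ⟨heq, ?_⟩
  rcases eq_or_ne ν ν' with h | h
  · rw [if_pos h]
    have hτν : τ = ν := by rw [hτdef, ← h, sup_idem]
    have h2c : 2 * c = l := by rw [hcdef, hτν]; exact aux_pair_card ν hν
    have hzero : (c : ℝ) - (l : ℝ) / 2 = 0 := by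
      have : (l : ℝ) = 2 * c := by exact_mod_cast h2c.symm
      rw [this]; ring
    refine Tendsto.congr' ?_ tendsto_const_nhds
    filter_upwards [eventually_ge_atTop 1] with m hm
    rw [heq m hm, hzero, Real.rpow_zero]
  · rw [if_neg h]
    have hge2 : ∀ d ∈ τ.classes, 2 ≤ d.ncard := aux_class_two_le ν τ hν le_sup_left
    have hlt : 2 * c < l := by
      refine lt_of_le_of_ne (aux_two_mul_le τ hge2) (fun hc2 => ?_)
      have hall := aux_all_two τ hge2 hc2
      have h1 : ν = τ := aux_eq_of_le ν τ hν hall le_sup_left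
      have h2 : ν' = τ := aux_eq_of_le ν' τ hν' hall le_sup_right
      exact h (h1.trans h2.symm)
    have he : (c : ℝ) - (l : ℝ) / 2 < 0 := by
      have : (2 * c : ℝ) < l := by exact_mod_cast hlt
      linarith
    have base : Tendsto (fun x : ℝ => x ^ ((c : ℝ) - (l : ℝ) / 2)) atTop (nhds 0) := by
      have := tendsto_rpow_neg_atTop (y := -((c : ℝ) - (l : ℝ) / 2)) (by linarith)
      simpa using this
    refine Tendsto.congr' ?_ (base.comp tendsto_natCast_atTop_atTop)
    filter_upwards [eventually_ge_atTop 1] with m hm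
    exact (heq m hm).symm
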